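/- Under the setup of a longest S-cycle C (δ⁰(D) ≥ ⌈(n+k)/2⌉ - 1, k ≥ 3, C not Hamiltonian, H outside C), let T_3 be the set of vertices on C sending edges to at least 3 vertices of H. Then |T_3| ≥ (n-k)/2 - |H|. Similarly for F_3, the set of vertices on C receiving edges from at least 3 vertices of H: |F_3| ≥ (n-k)/2 - |H|. -/

import Mathlib

/-!
Fix `h₀` off `C`; let `Q` be the vertices that reach `h₀`, and `P` those reached from `h₀`, by
walks off `C`. If `t ∈ C` sends an edge to `Q` and its successor on `C` receives one from `P`, the
walk through `h₀` is a detour lengthening `C` without disturbing `s`. So the successor map embeds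
the in-neighbours `S` of `Q` on `C` into the complement of the out-neighbours `R` of `P` on `C`,
and `|S| + |R| ≤ |C|`. Since `Q` contains every in-neighbour off `C` of its vertices and `P` every
out-neighbour off `C` of `h₀`, the semi-degree bound gives `|S| ≤ (n - k) / 2`, `|Q| ≥ k ≥ 3`, and
at least `|Q| (δ⁰ + 1 - |Q|)` edges from `S` to `Q`. A vertex of `S` sends at most two of these
edges unless it lies in `T₃`, and then at most `|Q|`; comparing the counts bounds `|T₃|`.
Reversing every edge turns `T₃` into `F₃`.
-/

def IsCycleList {V : Type*} (A : V → V → Prop) (l : List V) : Prop :=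
  2 ≤ l.length ∧ l.Nodup ∧ l.Chain' A ∧
    ∀ a ∈ l.getLast?, ∀ b ∈ l.head?, A a b

def EncountersInOrder {V : Type*} {k : ℕ} (l : List V) (s : Fin k → V) : Prop :=
  ∃ r, List.Sublist (List.ofFn s) (l.rotate r)

open Finset Relation

theorem List.exists_nodup_isChain_of_reflTransGen {α : Type*} {r : α → α → Prop}
    {p : α → Prop} {a b : α} (h : ReflTransGen (fun x y => r x y ∧ p x ∧ p y) a b) (ha : p a) :
    ∃ L : List α, L.Nodup ∧ L.IsChain r ∧ L.head? = some a ∧ L.getLast? = some b ∧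
      ∀ z ∈ L, p z := by
  induction h using ReflTransGen.head_induction_on with
  | refl => exact ⟨[b], List.nodup_singleton b, .singleton b, rfl, rfl, by simpa⟩
  | @head a c hac _ ih =>
    obtain ⟨L, hnd, hch, hhead, hlast, hp⟩ := ih hac.2.2
    by_cases haL : a ∈ L
    · obtain ⟨l₁, l₂, rfl⟩ := List.append_of_mem haL
      refine ⟨a :: l₂, hnd.sublist (List.sublist_append_right _ _), hch.right_of_append, rfl,
        ?_, fun z hz => hp z (List.mem_append_right _ hz)⟩
      rwa [List.getLast?_append_of_ne_nil _ (List.cons_ne_nil _ _)] at hlast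
    · refine ⟨a :: L, List.nodup_cons.mpr ⟨haL, hnd⟩, hch.cons (by simp [hhead, hac.1]), rfl,
        ?_, by simpa [ha] using hp⟩
      cases L <;> simp_all

section Cycles

variable {V : Type*} {A : V → V → Prop} {l l' : List V}

theorem isCycleList_iff_chain :
    IsCycleList A l ↔ 2 ≤ l.length ∧ l.Nodup ∧ Cycle.Chain A (l : Cycle V) := by
  rcases l with - | ⟨a, l⟩
  · simp [IsCycleList]
  · rw [IsCycleList, Cycle.chain_coe_cons, ← List.cons_append, List.isChain_append]
    simp only [List.IsChain.singleton, true_and]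
    exact Iff.rfl

theorem IsCycleList.of_isRotated (hl : IsCycleList A l) (h : l ~r l') : IsCycleList A l' := by
  rw [isCycleList_iff_chain, ← h.perm.length_eq, ← h.nodup_iff, ← Cycle.coe_eq_coe.mpr h]
  exact isCycleList_iff_chain.mp hl

theorem IsCycleList.append {L : List V} (hl : IsCycleList A l) (hL : L ≠ []) (hLnd : L.Nodup)
    (hLA : L.IsChain A) (hdisj : l.Disjoint L) (hin : ∀ a ∈ l.getLast?, ∀ b ∈ L.head?, A a b)
    (hout : ∀ a ∈ L.getLast?, ∀ b ∈ l.head?, A a b) : IsCycleList A (l ++ L) := by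
  obtain ⟨hlen, hnd, hch, -⟩ := hl
  refine ⟨by rw [List.length_append]; omega, hnd.append hLnd hdisj, hch.append hLA hin, ?_⟩
  have hl0 : l ≠ [] := List.ne_nil_of_length_pos (by omega)
  rwa [List.getLast?_append_of_ne_nil _ hL, List.head?_append_of_ne_nil _ hl0]

theorem EncountersInOrder.of_isRotated {k : ℕ} {s : Fin k → V} (h : EncountersInOrder l s)
    (hr : l ~r l') : EncountersInOrder l' s := by
  obtain ⟨r, hsub⟩ := h
  obtain ⟨r', hr'⟩ := ((List.IsRotated.forall l r).trans hr).symm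
  exact ⟨r', hr' ▸ hsub⟩

theorem EncountersInOrder.append {k : ℕ} {s : Fin k → V} (h : EncountersInOrder l s)
    (L : List V) : EncountersInOrder (l ++ L) s := by
  obtain ⟨r, hsub⟩ := h
  obtain ⟨r', hr', hrot⟩ := List.isRotated_iff_mod.mp (List.IsRotated.forall l r).symm
  refine ⟨r', hsub.trans ?_⟩
  rw [← hrot, List.rotate_eq_drop_append_take hr',
    List.rotate_eq_drop_append_take (by simp; omega), List.drop_append_of_le_length hr',
    List.take_append_of_le_length hr', List.append_assoc]
  exact (List.sublist_append_right L _).append_left _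

variable [DecidableEq V]

theorem List.exists_isRotated_append_singleton_head?_eq_next {x : V} (hnd : l.Nodup)
    (hlen : 2 ≤ l.length) (hx : x ∈ l) :
    ∃ l₀, l ~r l₀ ++ [x] ∧ l₀.head? = some (l.next x hx) := by
  obtain ⟨l₁, l₂, rfl⟩ := List.append_of_mem hx
  have hrot : l₁ ++ x :: l₂ ~r (l₂ ++ l₁) ++ [x] :=
    List.isRotated_append.trans List.IsRotated.cons_append_singleton
  obtain ⟨y, t, hyt⟩ : ∃ y t, l₂ ++ l₁ = y :: t :=
    List.exists_cons_of_ne_nil (List.ne_nil_of_length_pos (by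
      simp only [List.length_append, List.length_cons] at hlen ⊢; omega))
  refine ⟨l₂ ++ l₁, hrot, ?_⟩
  have hnd' : (y :: t ++ [x]).Nodup := by rw [← hyt]; exact hrot.nodup_iff.mp hnd
  rw [List.isRotated_next_eq hrot hnd]
  simp only [hyt]
  rw [List.next_cons_concat] <;> grind

def ReachAvoiding (A : V → V → Prop) (C : List V) : V → V → Prop :=
  ReflTransGen fun a b => A a b ∧ a ∉ C ∧ b ∉ C

def IsDetourFree (A : V → V → Prop) (C : List V) : Prop :=
  ∀ x (hx : x ∈ C) h h', h ∉ C → A x h → ReachAvoiding A C h h' → ¬ A h' (C.next x hx)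

theorem IsCycleList.isDetourFree {k : ℕ} {s : Fin k → V} {C : List V} (hC : IsCycleList A C)
    (hCs : EncountersInOrder C s)
    (hmax : ∀ C' : List V, IsCycleList A C' → EncountersInOrder C' s → C'.length ≤ C.length) :
    IsDetourFree A C := by
  intro x hx h h' hh hxh hreach hh'x
  obtain ⟨L, hLnd, hLA, hLh, hLl, hLC⟩ := List.exists_nodup_isChain_of_reflTransGen hreach hh
  obtain ⟨l₀, hrot, hl₀⟩ := List.exists_isRotated_append_singleton_head?_eq_next hC.2.1 hC.1 hx
  have hL : L ≠ [] := by rintro rfl; simp at hLh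
  have hcyc : IsCycleList A (l₀ ++ [x] ++ L) := (hC.of_isRotated hrot).append hL hLnd hLA
    (List.disjoint_right.mpr fun z hz hz' => hLC z hz (hrot.mem_iff.mpr hz'))
    (by simp [hLh, hxh]) (by simp [hLl, hl₀, hh'x])
  have := hmax _ hcyc ((hCs.of_isRotated hrot).append L)
  rw [List.length_append, ← hrot.perm.length_eq] at this
  exact hL (List.eq_nil_of_length_eq_zero (by omega))

theorem IsDetourFree.reverse {C : List V} (hnd : C.Nodup) (hfree : IsDetourFree A C) :
    IsDetourFree (fun a b => A b a) C.reverse := by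
  intro x hx h₁ h₂ hh₁ hxh₁ hreach hnext
  rw [List.next_reverse_eq_prev _ hnd x (List.mem_reverse.mp hx)] at hnext
  have hreach' : ReachAvoiding A C h₂ h₁ :=
    reflTransGen_swap.mp <| ReflTransGen.mono
      (fun a b hab => by simpa [Function.swap, and_comm] using hab) _ _ hreach
  have hh₂ : h₂ ∉ C := by
    rcases hreach'.cases_head with rfl | ⟨c, hc, -⟩
    · simpa using hh₁
    · exact hc.2.1
  refine hfree _ (List.prev_mem _ _ _) h₂ h₁ hh₂ hnext hreach' ?_
  rwa [List.next_prev _ hnd]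

end Cycles

theorem Finset.sum_card_bipartiteBelow_le {α β : Type*} {r : α → β → Prop}
    [∀ a b, Decidable (r a b)] (s : Finset α) (t : Finset β) (p : α → Prop) [DecidablePred p]
    {b : ℕ} (hb : ∀ a ∈ s, ¬ p a → #(t.bipartiteAbove r a) ≤ b) :
    ∑ y ∈ t, #(s.bipartiteBelow r y) ≤ #(s.filter p) * #t + #(s.filter (¬ p ·)) * b := by
  rw [← sum_card_bipartiteAbove_eq_sum_card_bipartiteBelow, ← sum_filter_add_sum_filter_not s p]
  gcongr
  · exact (sum_le_card_nsmul _ _ _ fun a _ => card_filter_le _ _).trans (by simp)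
  · exact (sum_le_card_nsmul _ _ _ fun a ha => hb a (mem_filter.mp ha).1
      (mem_filter.mp ha).2).trans (by simp)

theorem half_sub_le_of_counts {N k c m g p d s r a b : ℕ} (hk : 3 ≤ k) (hd : N + k ≤ 2 * d)
    (hN : c + m = N) (hgm : g ≤ m) (hpm : p ≤ m) (hsr : s + r ≤ c) (hout : d ≤ r + p)
    (hin : d ≤ s + g) (hab : a + b = s) (he : g * d ≤ a * g + b * 2 + g * g) :
    ((N : ℝ) - k) / 2 - m ≤ a := by
  have hs : s + d ≤ N := by omega
  have hkg : k ≤ g := by omega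
  rify at hk hd hab he hs hkg hgm
  -- the gap between the two sides, times `g - 2`, is at least `g (k - 2)`
  have key : ((g : ℝ) - 2) * ((N - k) / 2 - m) ≤ (g - 2) * a := by
    nlinarith [mul_le_mul_of_nonneg_left hd (by linarith : (0 : ℝ) ≤ g + 2),
      mul_nonneg (by linarith : (0 : ℝ) ≤ g - 2) (by linarith : (0 : ℝ) ≤ m - g),
      mul_nonneg (by linarith : (0 : ℝ) ≤ g) (by linarith : (0 : ℝ) ≤ k - 2)]
  exact le_of_mul_le_mul_left key (by linarith)

section Counting

variable {V : Type*} [Fintype V] [DecidableEq V] {A : V → V → Prop} [DecidableRel A]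
  {C : List V}

theorem List.length_add_card_filter_not_mem (hnd : C.Nodup) :
    C.length + #{v | v ∉ C} = Fintype.card V := by
  rw [← List.toFinset_card_of_nodup hnd, ← card_univ,
    ← card_filter_add_card_filter_not (s := univ) (· ∈ C)]
  congr 2
  ext; simp

theorem add_one_le_card_inNbrs_add_card (hirr : ∀ v, ¬ A v v) {δ : ℕ} {h : V}
    (hδ : δ ≤ #{w | A w h}) {Q : Finset V} (hh : h ∈ Q) (hQ : ∀ x, x ∉ C → A x h → x ∈ Q) :
    δ + 1 ≤ #{t | t ∈ C ∧ A t h} + #Q := by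
  have hsub : ({w | A w h} : Finset V) ⊆ ({t | t ∈ C ∧ A t h} : Finset V) ∪ Q.erase h := by
    intro x hx
    replace hx : A x h := by simpa using hx
    by_cases hxC : x ∈ C
    · simp [hxC, hx]
    · exact mem_union_right _ (mem_erase.mpr ⟨by rintro rfl; exact hirr _ hx, hQ x hxC hx⟩)
  have := (card_le_card hsub).trans (card_union_le _ _)
  rw [card_erase_of_mem hh] at this
  have := card_pos.mpr ⟨h, hh⟩
  omega

theorem IsDetourFree.card_add_card_le_length (hnd : C.Nodup) (hfree : IsDetourFree A C)
    {Q P : Finset V} (hQ : ∀ h ∈ Q, h ∉ C) (hQP : ∀ h ∈ Q, ∀ h' ∈ P, ReachAvoiding A C h h') :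
    #{t | t ∈ C ∧ ∃ h ∈ Q, A t h} + #{f | f ∈ C ∧ ∃ h ∈ P, A h f} ≤ C.length := by
  set R : Finset V := {f | f ∈ C ∧ ∃ h ∈ P, A h f}
  have hR : R ⊆ C.toFinset := fun f hf => List.mem_toFinset.mpr (mem_filter.mp hf).2.1
  have hsucc : #{t | t ∈ C ∧ ∃ h ∈ Q, A t h} ≤ #(C.toFinset \ R) := by
    refine card_le_card_of_injOn (fun t => if ht : t ∈ C then C.next t ht else t) ?_ ?_
    · rintro t ht
      obtain ⟨htC, h, hhQ, hth⟩ : t ∈ C ∧ ∃ h ∈ Q, A t h := by simpa using ht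
      simp only [dif_pos htC, coe_sdiff, Set.mem_sdiff, mem_coe, List.mem_toFinset]
      refine ⟨List.next_mem _ _ _, fun hR => ?_⟩
      obtain ⟨-, h', hh'P, hh'⟩ := by simpa [R] using hR
      exact hfree t htC h h' (hQ h hhQ) hth (hQP h hhQ h' hh'P) hh'
    · rintro t₁ ht₁ t₂ ht₂ heq
      have ht₁C : t₁ ∈ C := (mem_filter.mp ht₁).2.1
      have ht₂C : t₂ ∈ C := (mem_filter.mp ht₂).2.1
      simp only [dif_pos ht₁C, dif_pos ht₂C] at heq
      have := List.prev_next C hnd t₁ ht₁C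
      simp only [heq] at this
      rw [List.prev_next _ hnd] at this
      exact this.symm
  rw [card_sdiff_of_subset hR, List.toFinset_card_of_nodup hnd] at hsucc
  have := card_le_card hR
  rw [List.toFinset_card_of_nodup hnd] at this
  omega

theorem card_mul_le_of_le_card_bipartiteBelow {Q S : Finset V} {d : ℕ} (hQ : ∀ h ∈ Q, h ∉ C)
    (hin : ∀ h ∈ Q, d ≤ #(S.bipartiteBelow A h) + #Q) :
    #Q * d ≤ #(S.filter fun t => 3 ≤ #{h | h ∉ C ∧ A t h}) * #Q +
      #(S.filter fun t => ¬ 3 ≤ #{h | h ∉ C ∧ A t h}) * 2 + #Q * #Q := by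
  have hsum : #Q * d ≤ ∑ h ∈ Q, #(S.bipartiteBelow A h) + #Q * #Q := by
    simpa [sum_add_distrib] using sum_le_sum hin
  refine hsum.trans (Nat.add_le_add_right (sum_card_bipartiteBelow_le S Q _
    fun t _ ht => (card_le_card fun h hh => ?_).trans (Nat.le_of_lt_succ (not_le.mp ht))) _)
  obtain ⟨hhQ, hth⟩ := (mem_bipartiteAbove A).mp hh
  exact mem_filter.mpr ⟨mem_univ _, hQ h hhQ, hth⟩

theorem IsDetourFree.sub_le_card_T3 (hirr : ∀ v, ¬ A v v) {δ k : ℕ}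
    (hδ : ∀ v, δ ≤ #{w | A v w} ∧ δ ≤ #{w | A w v}) (hk : 3 ≤ k)
    (hNk : Fintype.card V + k ≤ 2 * (δ + 1)) (hnd : C.Nodup) (hfree : IsDetourFree A C)
    (hH : ∃ v, v ∉ C) :
    ((Fintype.card V - k : ℝ) / 2 - #{v | v ∉ C} ≤
      #{v | v ∈ C ∧ 3 ≤ #{h | h ∉ C ∧ A v h}}) := by
  classical
  obtain ⟨h₀, hh₀⟩ := hH
  set Q : Finset V := {x | x ∉ C ∧ ReachAvoiding A C x h₀}
  set P : Finset V := {x | x ∉ C ∧ ReachAvoiding A C h₀ x}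
  set S : Finset V := {t | t ∈ C ∧ ∃ h ∈ Q, A t h}
  set R : Finset V := {f | f ∈ C ∧ ∃ h ∈ P, A h f}
  have hh₀Q : h₀ ∈ Q := mem_filter.mpr ⟨mem_univ _, hh₀, ReflTransGen.refl⟩
  have hh₀P : h₀ ∈ P := mem_filter.mpr ⟨mem_univ _, hh₀, ReflTransGen.refl⟩
  have hin : ∀ h ∈ Q, δ + 1 ≤ #(S.bipartiteBelow A h) + #Q := fun h hh =>
    (add_one_le_card_inNbrs_add_card hirr (hδ h).2 hh fun x hxC hx => mem_filter.mpr
      ⟨mem_univ _, hxC, .head ⟨hx, hxC, (mem_filter.mp hh).2.1⟩ (mem_filter.mp hh).2.2⟩).trans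
      (by
        gcongr
        intro t ht
        simp only [S, mem_filter, mem_univ, true_and, mem_bipartiteBelow] at ht ⊢
        exact ⟨⟨ht.1, h, hh, ht.2⟩, ht.2⟩)
  have hout : δ + 1 ≤ #R + #P :=
    (add_one_le_card_inNbrs_add_card (A := fun a b => A b a) hirr (hδ h₀).1 hh₀P
      fun x hxC hx => mem_filter.mpr ⟨mem_univ _, hxC, .single ⟨hx, hh₀, hxC⟩⟩).trans
      (by
        gcongr
        intro f hf
        simp only [R, mem_filter] at hf ⊢
        exact ⟨hf.1, hf.2.1, h₀, hh₀P, hf.2.2⟩)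
  have hT3 : #(S.filter fun t => 3 ≤ #{h | h ∉ C ∧ A t h}) ≤
      #{v | v ∈ C ∧ 3 ≤ #{h | h ∉ C ∧ A v h}} :=
    card_le_card fun x hx => by simp_all [S]
  refine (half_sub_le_of_counts hk hNk (List.length_add_card_filter_not_mem hnd)
    (card_le_card fun x hx => by simp_all [Q]) (card_le_card fun x hx => by simp_all [P])
    (hfree.card_add_card_le_length hnd (fun h hh => (mem_filter.mp hh).2.1)
      fun h hh h' hh' => (mem_filter.mp hh).2.2.trans (mem_filter.mp hh').2.2)
    hout ((hin h₀ hh₀Q).trans (by gcongr; exact filter_subset _ _))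
    (card_filter_add_card_filter_not _)
    (card_mul_le_of_le_card_bipartiteBelow (fun h hh => (mem_filter.mp hh).2.1) hin)).trans
    (mod_cast hT3)

end Counting

theorem T3_and_F3_size_bounds_general
    {V : Type*} [Fintype V] [DecidableEq V]
    (A : V → V → Prop) [DecidableRel A] (hirr : Irreflexive A)
    (n k : ℕ) (hn : n = Fintype.card V) (hk : 3 ≤ k)
    (hdeg : ∀ v : V, (n + k + 1) / 2 - 1 ≤ (Finset.univ.filter fun w => A v w).card ∧
                     (n + k + 1) / 2 - 1 ≤ (Finset.univ.filter fun w => A w v).card)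
    (s : Fin k → V)
    (C : List V) (hC : IsCycleList A C) (hCs : EncountersInOrder C s)
    (hmax : ∀ C' : List V, IsCycleList A C' → EncountersInOrder C' s → C'.length ≤ C.length)
    (hnotHam : ∃ v : V, v ∉ C) :
    ((n - k : ℝ) / 2 - (Finset.univ.filter fun v => (v ∉ C : Prop)).card ≤
      ((Finset.univ.filter fun v => v ∈ C ∧
        3 ≤ (Finset.univ.filter fun h => h ∉ C ∧ A v h).card).card : ℝ)) ∧
    ((n - k : ℝ) / 2 - (Finset.univ.filter fun v => (v ∉ C : Prop)).card ≤
      ((Finset.univ.filter fun v => v ∈ C ∧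
        3 ≤ (Finset.univ.filter fun h => h ∉ C ∧ A h v).card).card : ℝ)) := by
  subst hn
  have hNk : Fintype.card V + k ≤ 2 * ((Fintype.card V + k + 1) / 2 - 1 + 1) := by omega
  have hfree := hC.isDetourFree hCs hmax
  refine ⟨hfree.sub_le_card_T3 hirr hdeg hk hNk hC.2.1 hnotHam, ?_⟩
  have := (hfree.reverse hC.2.1).sub_le_card_T3 (A := fun a b => A b a) hirr
    (fun v => (hdeg v).symm) hk hNk (List.nodup_reverse.mpr hC.2.1) (by simpa using hnotHam)
  simpa using this

/-- $|T_3|, |F_3| \ge (n-k)/2 - |H|$. -/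
theorem T3_and_F3_size_bounds
    {V : Type*} [Fintype V] [DecidableEq V]
    (A : V → V → Prop) [DecidableRel A] (hirr : Irreflexive A)
    (n k : ℕ) (hn : n = Fintype.card V) (hk : 3 ≤ k)
    (hdeg : ∀ v : V, (n + k + 1) / 2 - 1 ≤ (Finset.univ.filter fun w => A v w).card ∧
                     (n + k + 1) / 2 - 1 ≤ (Finset.univ.filter fun w => A w v).card)
    (s : Fin k → V) (hs : Function.Injective s)
    (C : List V) (hC : IsCycleList A C) (hCs : EncountersInOrder C s)
    (hmax : ∀ C' : List V, IsCycleList A C' → EncountersInOrder C' s → C'.length ≤ C.length)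
    (hnotHam : ∃ v : V, v ∉ C) :
    ((n - k : ℝ) / 2 - (Finset.univ.filter fun v => (v ∉ C : Prop)).card ≤
      ((Finset.univ.filter fun v => v ∈ C ∧
        3 ≤ (Finset.univ.filter fun h => h ∉ C ∧ A v h).card).card : ℝ)) ∧
    ((n - k : ℝ) / 2 - (Finset.univ.filter fun v => (v ∉ C : Prop)).card ≤
      ((Finset.univ.filter fun v => v ∈ C ∧
        3 ≤ (Finset.univ.filter fun h => h ∉ C ∧ A h v).card).card : ℝ)) :=
  T3_and_F3_size_bounds_general A hirr n k hn hk hdeg s C hC hCs hmax hnotHam
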